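/- Let X be a nonempty proper geodesic metric space and let the group G act on X by isometries, properly discontinuously (for every compact set K ⊆ X, the set {g ∈ G : (g • K) ∩ K ≠ ∅} is finite) and cocompactly (there is a compact set K ⊆ X with ⋃_{g ∈ G} g • K = X). Let S be a finite generating set of G and let ℓ_S : G → ℕ be the associated word length, i.e. ℓ_S(g) is the least n such that g is a product of n elements of S ∪ S⁻¹ (with ℓ_S(1) = 0). Then for every x₀ ∈ X there is a constant L ≥ 1 such that: (i) for all g, h ∈ G, (1/L)·d(g • x₀, h • x₀) − L ≤ ℓ_S(g⁻¹h) ≤ L·d(g • x₀, h • x₀) + L; and (ii) every point of X lies within distance L of the orbit {g • x₀ : g ∈ G}. In other words, the orbit map g ↦ g • x₀ is a quasi-isometry from G (with the word metric of S) to X. -/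

import Mathlib

/-!
Cocompactness makes the orbit of `x₀` `R`-dense for some `R`. The lower bound on word length is
the triangle inequality along a word, each letter moving `x₀` a bounded distance. For the upper
bound, induct on `d(x₀, k • x₀)`: the point at distance `R + 1` from `k • x₀` on a geodesic from
`x₀` lies within `R` of some `g • x₀`, which is one unit closer to `x₀`, while `g⁻¹ * k` moves `x₀`
at most `2R + 1`. Proper discontinuity leaves only finitely many elements moving `x₀` that little,
so their word lengths are bounded by some `M`, and each unit of distance costs at most `M` letters.
-/

open Pointwise

/-- The word length of `g` with respect to a generating set `S`: the least `n`
such that `g` is a product of `n` elements of `S ∪ S⁻¹`. -/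
noncomputable def wordLength {G : Type*} [Group G] (S : Finset G) (g : G) : ℕ :=
  sInf {n : ℕ | ∃ l : List G, l.length = n ∧ (∀ a ∈ l, a ∈ S ∨ a⁻¹ ∈ S) ∧ l.prod = g}

section WordLength

variable {G : Type*} [Group G] (S : Finset G)

theorem wordLength_prod_le_length (l : List G) (hl : ∀ a ∈ l, a ∈ S ∨ a⁻¹ ∈ S) :
    wordLength S l.prod ≤ l.length :=
  Nat.sInf_le ⟨l, rfl, hl, rfl⟩

variable {S}

theorem exists_list_length_eq_wordLength (hS : Subgroup.closure (S : Set G) = ⊤) (g : G) :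
    ∃ l : List G, l.length = wordLength S g ∧ (∀ a ∈ l, a ∈ S ∨ a⁻¹ ∈ S) ∧ l.prod = g := by
  have hg : g ∈ Submonoid.closure ((S : Set G) ∪ (S : Set G)⁻¹) := by
    rw [← Subgroup.closure_toSubmonoid, hS]
    exact Subgroup.mem_top g
  obtain ⟨l, hl, rfl⟩ := Submonoid.exists_list_of_mem_closure hg
  exact (Nat.sInf_mem ⟨l.length, l, rfl, hl, rfl⟩ : wordLength S l.prod ∈
    {n : ℕ | ∃ l' : List G, l'.length = n ∧ (∀ a ∈ l', a ∈ S ∨ a⁻¹ ∈ S) ∧ l'.prod = l.prod})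

theorem wordLength_mul_le (hS : Subgroup.closure (S : Set G) = ⊤) (a b : G) :
    wordLength S (a * b) ≤ wordLength S a + wordLength S b := by
  obtain ⟨l₁, hl₁, ha, rfl⟩ := exists_list_length_eq_wordLength hS a
  obtain ⟨l₂, hl₂, hb, rfl⟩ := exists_list_length_eq_wordLength hS b
  rw [← hl₁, ← hl₂, ← List.prod_append, ← List.length_append]
  exact wordLength_prod_le_length S _ (List.forall_mem_append.mpr ⟨ha, hb⟩)

end WordLength

def IsGeodesicSpace (X : Type*) [PseudoMetricSpace X] : Prop :=
  ∀ x y : X, ∃ γ : ℝ → X, γ 0 = x ∧ γ (dist x y) = y ∧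
    ∀ s ∈ Set.Icc (0 : ℝ) (dist x y), ∀ t ∈ Set.Icc (0 : ℝ) (dist x y), dist (γ s) (γ t) = |s - t|

theorem IsGeodesicSpace.exists_dist_eq_dist_sub {X : Type*} [PseudoMetricSpace X]
    (hgeo : IsGeodesicSpace X) (x y : X) {t : ℝ} (ht₀ : 0 ≤ t) (ht : t ≤ dist x y) :
    ∃ p : X, dist x p = t ∧ dist p y = dist x y - t := by
  obtain ⟨γ, hγ₀, hγ₁, hγ⟩ := hgeo x y
  have h₀ : (0 : ℝ) ∈ Set.Icc 0 (dist x y) := ⟨le_rfl, dist_nonneg⟩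
  have hd : dist x y ∈ Set.Icc 0 (dist x y) := ⟨dist_nonneg, le_rfl⟩
  have htI : t ∈ Set.Icc 0 (dist x y) := ⟨ht₀, ht⟩
  refine ⟨γ t, ?_, ?_⟩
  · rw [← hγ₀, hγ 0 h₀ t htI, zero_sub, abs_neg, abs_of_nonneg ht₀]
  · rw [← hγ₁, hγ t htI _ hd, hγ₁, abs_of_nonpos (by linarith)]
    ring

theorem finite_setOf_dist_smul_le {G X : Type*} [Group G] [PseudoMetricSpace X] [ProperSpace X]
    [MulAction G X]
    (hpd : ∀ K : Set X, IsCompact K → {g : G | (g • K ∩ K).Nonempty}.Finite) (x : X) (D : ℝ) :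
    {g : G | dist x (g • x) ≤ D}.Finite := by
  refine (hpd _ (isCompact_closedBall x D)).subset fun g hg => ⟨g • x, ?_, ?_⟩
  · exact Set.smul_mem_smul_set (Metric.mem_closedBall_self (dist_nonneg.trans hg))
  · exact Metric.mem_closedBall'.mpr hg

section IsometricAction

variable {G X : Type*} [Group G] [PseudoMetricSpace X] [MulAction G X] [IsIsometricSMul G X]

theorem dist_smul_smul_eq_dist_inv_mul_smul (g h : G) (x : X) :
    dist (g • x) (h • x) = dist x ((g⁻¹ * h) • x) := by
  rw [← dist_smul g⁻¹, inv_smul_smul, smul_smul]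

theorem dist_inv_smul_right (g : G) (x : X) : dist x (g⁻¹ • x) = dist x (g • x) := by
  rw [dist_comm, ← dist_smul g, smul_inv_smul]

theorem dist_list_prod_smul_le {C : ℝ} (x : X) (l : List G) (hl : ∀ a ∈ l, dist x (a • x) ≤ C) :
    dist x (l.prod • x) ≤ C * l.length := by
  induction l with
  | nil => simp
  | cons a l ih =>
    have ha := hl a List.mem_cons_self
    have hl' := ih fun b hb => hl b (List.mem_cons_of_mem a hb)
    have hshift : dist (a • x) ((a :: l).prod • x) = dist x (l.prod • x) := by
      rw [List.prod_cons, ← smul_smul, dist_smul]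
    calc dist x ((a :: l).prod • x)
        ≤ dist x (a • x) + dist (a • x) ((a :: l).prod • x) := dist_triangle _ _ _
      _ ≤ C * (a :: l).length := by
        rw [hshift, List.length_cons]
        push_cast
        linarith

theorem dist_smul_le_wordLength_mul {S : Finset G} (hS : Subgroup.closure (S : Set G) = ⊤)
    (x : X) (g : G) : dist x (g • x) ≤ (∑ s ∈ S, dist x (s • x)) * wordLength S g := by
  obtain ⟨l, hlen, hl, rfl⟩ := exists_list_length_eq_wordLength hS g
  rw [← hlen]
  refine dist_list_prod_smul_le x l fun a ha => ?_
  have hle : ∀ s ∈ S, dist x (s • x) ≤ ∑ s ∈ S, dist x (s • x) := fun s hs =>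
    Finset.single_le_sum (f := fun s : G => dist x (s • x)) (fun _ _ => dist_nonneg) hs
  rcases hl a ha with h | h
  · exact hle a h
  · exact dist_inv_smul_right a x ▸ hle a⁻¹ h

theorem exists_dist_smul_le_of_iUnion_smul_eq_univ {K : Set X} (hK : Bornology.IsBounded K)
    (hcov : ⋃ g : G, g • K = Set.univ) (x₀ : X) :
    ∃ R : ℝ, ∀ x : X, ∃ g : G, dist x (g • x₀) ≤ R := by
  obtain ⟨R, hR⟩ := (Metric.isBounded_iff_subset_closedBall x₀).mp hK
  refine ⟨R, fun x => ?_⟩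
  obtain ⟨g, k, hk, rfl⟩ := Set.mem_iUnion.mp (hcov.symm ▸ Set.mem_univ x)
  exact ⟨g, by rw [dist_smul]; exact hR hk⟩

theorem wordLength_le_of_dist_le_nat_add
    (hgeo : IsGeodesicSpace X) {S : Finset G} (hS : Subgroup.closure (S : Set G) = ⊤)
    {x₀ : X} {R : ℝ} {M : ℕ}
    (hR : ∀ x : X, ∃ g : G, dist x (g • x₀) ≤ R)
    (hM : ∀ g : G, dist x₀ (g • x₀) ≤ 2 * R + 1 → wordLength S g ≤ M) (n : ℕ) (k : G)
    (hk : dist x₀ (k • x₀) ≤ n + R) : wordLength S k ≤ M * (n + 1) := by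
  have hR₀ : 0 ≤ R := (hR x₀).elim fun _ => dist_nonneg.trans
  induction n generalizing k with
  | zero => simpa using hM k (by push_cast at hk; linarith)
  | succ n ih =>
    set d := dist x₀ (k • x₀)
    by_cases hshort : d ≤ 2 * R + 1
    · exact (hM k hshort).trans (Nat.le_mul_of_pos_right M (by omega))
    obtain ⟨p, hx₀p, hpk⟩ :=
      hgeo.exists_dist_eq_dist_sub x₀ (k • x₀) (t := d - (R + 1)) (by linarith) (by linarith)
    obtain ⟨g, hpg⟩ := hR p
    have hg : dist x₀ (g • x₀) ≤ n + R := by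
      have := dist_triangle x₀ p (g • x₀)
      push_cast at hk
      linarith
    have hgk : dist x₀ ((g⁻¹ * k) • x₀) ≤ 2 * R + 1 := by
      rw [← dist_smul_smul_eq_dist_inv_mul_smul]
      have := dist_triangle_left (g • x₀) (k • x₀) p
      linarith
    calc wordLength S k = wordLength S (g * (g⁻¹ * k)) := by rw [mul_inv_cancel_left]
      _ ≤ wordLength S g + wordLength S (g⁻¹ * k) := wordLength_mul_le hS _ _
      _ ≤ M * (n + 1) + M := add_le_add (ih g hg) (hM _ hgk)
      _ = M * (n + 1 + 1) := by ring

theorem wordLength_le_mul_dist_add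
    (hgeo : IsGeodesicSpace X) {S : Finset G} (hS : Subgroup.closure (S : Set G) = ⊤)
    {x₀ : X} {R : ℝ} {M : ℕ}
    (hR : ∀ x : X, ∃ g : G, dist x (g • x₀) ≤ R)
    (hM : ∀ g : G, dist x₀ (g • x₀) ≤ 2 * R + 1 → wordLength S g ≤ M) (k : G) :
    (wordLength S k : ℝ) ≤ M * dist x₀ (k • x₀) + 2 * M := by
  set d := dist x₀ (k • x₀)
  have hR₀ : 0 ≤ R := (hR x₀).elim fun _ => dist_nonneg.trans
  have hceil : (⌈d⌉₊ : ℝ) < d + 1 := Nat.ceil_lt_add_one dist_nonneg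
  have hk := wordLength_le_of_dist_le_nat_add hgeo hS hR hM ⌈d⌉₊ k (by linarith [Nat.le_ceil d])
  have hM₀ : (0 : ℝ) ≤ M := M.cast_nonneg
  calc (wordLength S k : ℝ) ≤ M * (⌈d⌉₊ + 1) := by exact_mod_cast hk
    _ ≤ M * d + 2 * M := by nlinarith

end IsometricAction

theorem svarc_milnor_quasiIsometry_general
    {G : Type*} [Group G] {X : Type*} [MetricSpace X] [ProperSpace X]
    [MulAction G X]
    -- `X` is geodesic
    (hgeo : ∀ x y : X, ∃ γ : ℝ → X, γ 0 = x ∧ γ (dist x y) = y ∧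
      ∀ s ∈ Set.Icc (0 : ℝ) (dist x y), ∀ t ∈ Set.Icc (0 : ℝ) (dist x y),
        dist (γ s) (γ t) = |s - t|)
    -- the action is by isometries
    (hiso : ∀ (g : G) (x y : X), dist (g • x) (g • y) = dist x y)
    -- the action is properly discontinuous
    (hpd : ∀ K : Set X, IsCompact K → {g : G | (g • K ∩ K).Nonempty}.Finite)
    -- the action is cocompact
    (hcc : ∃ K : Set X, IsCompact K ∧ ⋃ g : G, g • K = Set.univ)
    -- `S` is a finite generating set of `G`
    (S : Finset G) (hS : Subgroup.closure (S : Set G) = ⊤)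
    (x₀ : X) :
    ∃ L : ℝ, 1 ≤ L ∧
      (∀ g h : G,
        (1 / L) * dist (g • x₀) (h • x₀) - L ≤ (wordLength S (g⁻¹ * h) : ℝ) ∧
        (wordLength S (g⁻¹ * h) : ℝ) ≤ L * dist (g • x₀) (h • x₀) + L) ∧
      (∀ x : X, ∃ g : G, dist x (g • x₀) ≤ L) := by
  have : IsIsometricSMul G X := ⟨fun g => Isometry.of_dist_eq (hiso g)⟩
  obtain ⟨K, hK, hKcov⟩ := hcc
  obtain ⟨R, hR⟩ := exists_dist_smul_le_of_iUnion_smul_eq_univ hK.isBounded hKcov x₀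
  obtain ⟨M, hMbound⟩ :=
    ((finite_setOf_dist_smul_le hpd x₀ (2 * R + 1)).image (wordLength S)).bddAbove
  have hM : ∀ g : G, dist x₀ (g • x₀) ≤ 2 * R + 1 → wordLength S g ≤ M :=
    fun g hg => hMbound ⟨g, hg, rfl⟩
  set C := ∑ s ∈ S, dist x₀ (s • x₀)
  have hC₀ : 0 ≤ C := Finset.sum_nonneg fun _ _ => dist_nonneg
  have hR₀ : 0 ≤ R := (hR x₀).elim fun _ => dist_nonneg.trans
  have hM₀ : (0 : ℝ) ≤ M := M.cast_nonneg
  set L : ℝ := 1 + C + R + 2 * M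
  refine ⟨L, by linarith, fun g h => ?_, fun x => (hR x).imp fun _ hg => by linarith⟩
  rw [dist_smul_smul_eq_dist_inv_mul_smul]
  have hlower := dist_smul_le_wordLength_mul hS x₀ (g⁻¹ * h)
  have hupper := wordLength_le_mul_dist_add hgeo hS hR hM (g⁻¹ * h)
  have hw₀ : (0 : ℝ) ≤ wordLength S (g⁻¹ * h) := Nat.cast_nonneg _
  have hd₀ : 0 ≤ dist x₀ ((g⁻¹ * h) • x₀) := dist_nonneg
  constructor
  · rw [one_div_mul_eq_div, sub_le_iff_le_add, div_le_iff₀ (by linarith)]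
    nlinarith
  · nlinarith

/-- **Švarc–Milnor lemma, quasi-isometry part.**
If a group `G` acts by isometries on a nonempty proper geodesic metric space `X`,
properly discontinuously and cocompactly, and `S` is a finite generating set of `G`,
then for any base point `x₀` the orbit map `g ↦ g • x₀` is a quasi-isometry from
`G`, with the word metric of `S`, to `X`. -/
theorem svarc_milnor_quasiIsometry
    {G : Type*} [Group G] {X : Type*} [MetricSpace X] [Nonempty X] [ProperSpace X]
    [MulAction G X]
    -- `X` is geodesic
    (hgeo : ∀ x y : X, ∃ γ : ℝ → X, γ 0 = x ∧ γ (dist x y) = y ∧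
      ∀ s ∈ Set.Icc (0 : ℝ) (dist x y), ∀ t ∈ Set.Icc (0 : ℝ) (dist x y),
        dist (γ s) (γ t) = |s - t|)
    -- the action is by isometries
    (hiso : ∀ (g : G) (x y : X), dist (g • x) (g • y) = dist x y)
    -- the action is properly discontinuous
    (hpd : ∀ K : Set X, IsCompact K → {g : G | (g • K ∩ K).Nonempty}.Finite)
    -- the action is cocompact
    (hcc : ∃ K : Set X, IsCompact K ∧ ⋃ g : G, g • K = Set.univ)
    -- `S` is a finite generating set of `G`
    (S : Finset G) (hS : Subgroup.closure (S : Set G) = ⊤)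
    (x₀ : X) :
    ∃ L : ℝ, 1 ≤ L ∧
      (∀ g h : G,
        (1 / L) * dist (g • x₀) (h • x₀) - L ≤ (wordLength S (g⁻¹ * h) : ℝ) ∧
        (wordLength S (g⁻¹ * h) : ℝ) ≤ L * dist (g • x₀) (h • x₀) + L) ∧
      (∀ x : X, ∃ g : G, dist x (g • x₀) ≤ L) :=
  svarc_milnor_quasiIsometry_general hgeo hiso hpd hcc S hS x₀
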